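/- Let G ⊆ ℝⁿ be open and f : G → ℝ a Lipschitz function. Then the set of points x ∈ G at which all n partial derivatives of f exist but f is not Fréchet differentiable at x is σ-upper porous (and in particular both meager and Lebesgue null). -/

import Mathlib

open Metric Set Topology

/-- `A` is (upper) porous at `x`. -/
def PorousAt {Z : Type*} [MetricSpace Z] (A : Set Z) (x : Z) : Prop :=
  ∃ c > (0 : ℝ), ∀ δ > (0 : ℝ), ∃ t, t ∈ Metric.ball x δ ∧ t ≠ x ∧
    Metric.ball t (c * dist t x) ∩ A = ∅

/-- `A` is (upper) porous: porous at each of its points. -/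
def Porous {Z : Type*} [MetricSpace Z] (A : Set Z) : Prop :=
  ∀ x ∈ A, PorousAt A x

/-- `A` is σ-(upper) porous: a countable union of porous sets. -/
def SigmaPorous {Z : Type*} [MetricSpace Z] (A : Set Z) : Prop :=
  ∃ u : ℕ → Set Z, (∀ n, Porous (u n)) ∧ A = ⋃ n, u n

/-!
If the partial derivatives `dᵢ` exist at `x` and each remainder `f (y + t eᵢ) - f y - dᵢ t` is
`o(‖(y - x, t)‖)` as `(y, t) → (x, 0)`, telescoping along the coordinates shows that `f` is
differentiable at `x`. So at a point of the set some remainder is not, and after replacing `dᵢ` by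
a rational slope `q` the point lies in a set `dirDefectSet f eᵢ q ε η`: the slope `q` is
`ε`-accurate at `x` up to scale `η`, yet `2ε`-inaccurate increments from `y` to `y + t eᵢ` occur
arbitrarily close to `x`. For `K`-Lipschitz `f` no point of this set lies within `ε |t| / (2K + 1)`
of `y + t eᵢ`, since its accurate slope would make that increment accurate; and the Lipschitz bound
on the remainder forces `|t| ≳ ‖y - x‖`. Hence these sets are porous, and countably many rational
parameters cover the set. Porous sets are nowhere dense, Rademacher's theorem gives nullness, and a
Lipschitz function on `G` is first extended to the whole space.
-/

open Filter Asymptotics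

section Porosity

variable {Z : Type*} [MetricSpace Z] {A B : Set Z}

theorem Porous.mono (hB : Porous B) (hAB : A ⊆ B) : Porous A := by
  intro x hx
  obtain ⟨c, hc, hpor⟩ := hB x (hAB hx)
  refine ⟨c, hc, fun δ hδ => ?_⟩
  obtain ⟨t, htx, hne, hhole⟩ := hpor δ hδ
  exact ⟨t, htx, hne, subset_empty_iff.1 (hhole ▸ inter_subset_inter_right _ hAB)⟩

theorem porous_empty : Porous (∅ : Set Z) := fun _ hx => hx.elim

theorem Porous.isNowhereDense (hA : Porous A) : IsNowhereDense A := by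
  rw [IsNowhereDense, interior_eq_empty_iff_dense_compl, Metric.dense_iff]
  intro x₀ r hr
  by_cases hx₀ : x₀ ∈ closure A
  swap
  · exact ⟨x₀, mem_ball_self hr, hx₀⟩
  obtain ⟨x, hxA, hx⟩ := Metric.mem_closure_iff.1 hx₀ (r / 2) (half_pos hr)
  obtain ⟨c, hc, hpor⟩ := hA x hxA
  obtain ⟨t, htx, hne, hhole⟩ := hpor (r / 2) (half_pos hr)
  refine ⟨t, ?_, fun ht => ?_⟩
  · rw [mem_ball] at htx ⊢
    linarith [dist_triangle t x x₀, dist_comm x₀ x]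
  · have hρ : 0 < c * dist t x := mul_pos hc (dist_pos.2 hne)
    obtain ⟨a, haA, hta⟩ := Metric.mem_closure_iff.1 ht _ hρ
    have ha : a ∈ ball t (c * dist t x) ∩ A := ⟨mem_ball'.2 hta, haA⟩
    rwa [hhole] at ha

theorem SigmaPorous.mono (hB : SigmaPorous B) (hAB : A ⊆ B) : SigmaPorous A := by
  obtain ⟨u, hu, rfl⟩ := hB
  refine ⟨fun k => u k ∩ A, fun k => (hu k).mono inter_subset_left, ?_⟩
  rw [← iUnion_inter, inter_eq_right.2 hAB]

theorem sigmaPorous_iUnion {ι : Type*} [Countable ι] {u : ι → Set Z} (hu : ∀ i, Porous (u i)) :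
    SigmaPorous (⋃ i, u i) := by
  rcases isEmpty_or_nonempty ι with hι | hι
  · exact ⟨fun _ => ∅, fun _ => porous_empty, by simp⟩
  · obtain ⟨g, hg⟩ := exists_surjective_nat ι
    exact ⟨u ∘ g, fun k => hu (g k), (hg.iUnion_comp u).symm⟩

theorem SigmaPorous.isMeagre (hA : SigmaPorous A) : IsMeagre A := by
  obtain ⟨u, hu, rfl⟩ := hA
  exact isMeagre_iUnion fun k => (hu k).isNowhereDense.isMeagre

end Porosity

theorem abs_snd_le_dist {X : Type*} [PseudoMetricSpace X] (p : X × ℝ) (x : X) :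
    |p.2| ≤ dist p (x, 0) := by
  calc |p.2| = dist p.2 0 := by simp
    _ ≤ dist p (x, 0) := le_max_right _ _

section Directional

variable {E : Type*} [NormedAddCommGroup E] [NormedSpace ℝ E]

def dirRemainder (f : E → ℝ) (v : E) (q : ℝ) (p : E × ℝ) : ℝ :=
  f (p.1 + p.2 • v) - f p.1 - q * p.2

theorem dirRemainder_eq_add (f : E → ℝ) (v : E) (q d : ℝ) (p : E × ℝ) :
    dirRemainder f v q p = dirRemainder f v d p + (d - q) * p.2 := by
  unfold dirRemainder
  ring

theorem LipschitzWith.abs_dirRemainder_le {K : NNReal} {f : E → ℝ} (hf : LipschitzWith K f)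
    (v : E) (q : ℝ) (p : E × ℝ) : |dirRemainder f v q p| ≤ (K * ‖v‖ + |q|) * |p.2| := by
  have hlip : |f (p.1 + p.2 • v) - f p.1| ≤ K * (|p.2| * ‖v‖) := by
    simpa [Real.dist_eq, dist_eq_norm, norm_smul] using hf.dist_le_mul (p.1 + p.2 • v) p.1
  calc |dirRemainder f v q p| ≤ |f (p.1 + p.2 • v) - f p.1| + |q * p.2| := abs_sub _ _
    _ ≤ K * (|p.2| * ‖v‖) + |q| * |p.2| := by rw [abs_mul]; gcongr
    _ = (K * ‖v‖ + |q|) * |p.2| := by ring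

theorem dist_add_smul_le (y x v : E) (t : ℝ) :
    dist (y + t • v) x ≤ (1 + ‖v‖) * dist (y, t) (x, 0) := by
  calc dist (y + t • v) x ≤ dist y x + |t| * ‖v‖ := by
        rw [dist_eq_norm, dist_eq_norm, add_sub_right_comm, ← Real.norm_eq_abs, ← norm_smul]
        exact norm_add_le _ _
    _ ≤ dist (y, t) (x, 0) + dist (y, t) (x, 0) * ‖v‖ := by
        gcongr
        · exact le_max_left _ _
        · exact abs_snd_le_dist (y, t) x
    _ = (1 + ‖v‖) * dist (y, t) (x, 0) := by ring

def dirDefectSet (f : E → ℝ) (v : E) (q ε η : ℝ) : Set E :=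
  {x | (∀ s, |s| ≤ η → |dirRemainder f v q (x, s)| ≤ ε * |s|) ∧
    ∃ᶠ p in 𝓝 (x, 0), 2 * ε * dist p (x, 0) < |dirRemainder f v q p|}

theorem LipschitzWith.ball_inter_dirDefectSet_eq_empty {K : NNReal} {f : E → ℝ}
    (hf : LipschitzWith K f) {v : E} {q ε η : ℝ} (hε : 0 ≤ ε) {y : E} {t : ℝ} (htη : |t| ≤ η)
    (hbad : 2 * ε * |t| < |dirRemainder f v q (y, t)|) :
    ball (y + t • v) (ε / (2 * K + 1) * |t|) ∩ dirDefectSet f v q ε η = ∅ := by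
  refine eq_empty_iff_forall_notMem.2 fun u ⟨hu, hgood, _⟩ => hbad.not_ge ?_
  set z := y + t • v
  set r := ε / (2 * K + 1)
  have hr : 2 * K * r ≤ ε := by
    rw [mul_div_assoc', div_le_iff₀ (by positivity)]
    nlinarith
  have hzu : dist z u < r * |t| := mem_ball'.1 hu
  have h₁ : |f z - f u| ≤ K * dist z u := by
    simpa [Real.dist_eq] using hf.dist_le_mul z u
  have h₂ : |f (u + (-t) • v) - f y| ≤ K * dist z u := by
    have hyz : dist (u + (-t) • v) y = dist z u := by
      rw [dist_eq_norm, dist_eq_norm, ← norm_neg]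
      congr 1
      simp only [z, neg_smul]
      abel
    rw [← hyz, ← Real.dist_eq]
    exact hf.dist_le_mul _ _
  have h₃ : |dirRemainder f v q (u, -t)| ≤ ε * |t| := by
    simpa using hgood (-t) (by rwa [abs_neg])
  -- the increment from `y` to `z` is the reversed increment at `u`, up to two Lipschitz errors
  have hsplit : dirRemainder f v q (y, t) =
      (f z - f u) + (f (u + (-t) • v) - f y) - dirRemainder f v q (u, -t) := by
    simp only [dirRemainder, z]
    ring
  have hK : K * dist z u ≤ K * (r * |t|) := by gcongr
  have hrt : 2 * K * r * |t| ≤ ε * |t| := by gcongr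
  calc |dirRemainder f v q (y, t)|
      ≤ |f z - f u| + |f (u + (-t) • v) - f y| + |dirRemainder f v q (u, -t)| := by
        rw [hsplit]
        exact (abs_sub _ _).trans (add_le_add_left (abs_add_le _ _) _)
    _ ≤ 2 * ε * |t| := by linarith

theorem LipschitzWith.porous_dirDefectSet {K : NNReal} {f : E → ℝ} (hf : LipschitzWith K f)
    (v : E) (q : ℝ) {ε η : ℝ} (hε : 0 < ε) (hη : 0 < η) : Porous (dirDefectSet f v q ε η) := by
  intro x hx
  set r := ε / (2 * K + 1)
  set C := K * ‖v‖ + |q|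
  have hC : 0 ≤ C := by positivity
  refine ⟨2 * ε * r / ((C + 1) * (1 + ‖v‖)), by positivity, fun δ hδ => ?_⟩
  obtain ⟨⟨y, t⟩, hp, hpbad⟩ := Metric.nhds_basis_ball.frequently_iff.1 hx.2
    (min (δ / (1 + ‖v‖)) η) (by positivity)
  set D := dist (y, t) (x, 0)
  have hD : D < min (δ / (1 + ‖v‖)) η := mem_ball.1 hp
  have htD : |t| ≤ D := abs_snd_le_dist (y, t) x
  -- so `|t|` is comparable to `D`, and the hole at `y + t • v` to its distance from `x`
  have hDC : 2 * ε * D < C * |t| := hpbad.trans_le (hf.abs_dirRemainder_le v q (y, t))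
  have ht : 0 < |t| := pos_of_mul_pos_right ((by positivity : 0 ≤ 2 * ε * D).trans_lt hDC) hC
  have hhole := hf.ball_inter_dirDefectSet_eq_empty hε.le
    (htD.trans (hD.le.trans (min_le_right _ _)))
    (lt_of_le_of_lt (by gcongr) hpbad : 2 * ε * |t| < _)
  have hzx : dist (y + t • v) x ≤ (1 + ‖v‖) * D := dist_add_smul_le y x v t
  refine ⟨y + t • v, ?_, fun h => ?_, ?_⟩
  · calc dist (y + t • v) x ≤ (1 + ‖v‖) * D := hzx
      _ < (1 + ‖v‖) * (δ / (1 + ‖v‖)) := by gcongr; exact hD.trans_le (min_le_left _ _)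
      _ = δ := by field_simp
  · have hxhole : x ∈ ball (y + t • v) (r * |t|) ∩ dirDefectSet f v q ε η :=
      ⟨h ▸ mem_ball_self (by positivity), hx⟩
    rwa [hhole] at hxhole
  · refine subset_empty_iff.1 (hhole ▸ inter_subset_inter_left _ (ball_subset_ball ?_))
    calc 2 * ε * r / ((C + 1) * (1 + ‖v‖)) * dist (y + t • v) x
        ≤ 2 * ε * r / ((C + 1) * (1 + ‖v‖)) * ((1 + ‖v‖) * D) := by gcongr
      _ = r * (2 * ε * D) / (C + 1) := by field_simp
      _ ≤ r * (C * |t|) / (C + 1) := by gcongr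
      _ ≤ r * |t| := by
        rw [div_le_iff₀ (by positivity)]
        nlinarith [mul_nonneg (by positivity : 0 ≤ r) ht.le]

theorem exists_mem_dirDefectSet {f : E → ℝ} {v x : E} {d : ℝ}
    (hd : HasDerivAt (fun s : ℝ => f (x + s • v)) d 0)
    (hR : ¬ dirRemainder f v d =o[𝓝 (x, 0)] fun p => p - (x, 0)) :
    ∃ (q : ℚ) (k m : ℕ), x ∈ dirDefectSet f v q (1 / (k + 1)) (1 / (m + 1)) := by
  obtain ⟨ε₀, hε₀, hfreq⟩ :
      ∃ ε₀ > 0, ∃ᶠ p in 𝓝 (x, 0), ε₀ * dist p (x, 0) < |dirRemainder f v d p| := by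
    simpa [isLittleO_iff, not_eventually, dist_eq_norm] using hR
  obtain ⟨k, hk⟩ := exists_nat_one_div_lt (show 0 < ε₀ / 3 by positivity)
  set ε : ℝ := 1 / (k + 1)
  have hε : 0 < ε := by positivity
  obtain ⟨η, hη, hslope⟩ :
      ∃ η > 0, ∀ s : ℝ, |s| < η → |dirRemainder f v d (x, s)| ≤ ε / 2 * |s| := by
    have := (hasDerivAt_iff_isLittleO_nhds_zero.1 hd).def (half_pos hε)
    obtain ⟨η, hη, h⟩ := Metric.eventually_nhds_iff.1 this
    exact ⟨η, hη, fun s hs => by simpa [dirRemainder, mul_comm] using h (by simpa using hs)⟩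
  obtain ⟨m, hm⟩ := exists_nat_one_div_lt hη
  obtain ⟨q, hq⟩ : ∃ q : ℚ, |d - q| ≤ ε / 2 := by
    obtain ⟨q, hq₁, hq₂⟩ := exists_rat_btwn (show d - ε / 2 < d by linarith)
    exact ⟨q, abs_le.2 ⟨by linarith, by linarith⟩⟩
  have hshift : ∀ p : E × ℝ, |(d - q) * p.2| ≤ ε / 2 * |p.2| := fun p => by
    rw [abs_mul]; gcongr
  refine ⟨q, k, m, fun s hs => ?_, hfreq.mono fun p hp => ?_⟩
  · calc |dirRemainder f v q (x, s)| ≤ ε / 2 * |s| + ε / 2 * |s| := by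
          rw [dirRemainder_eq_add f v q d]
          exact (abs_add_le _ _).trans (add_le_add (hslope s (hs.trans_lt hm)) (hshift (x, s)))
      _ = ε * |s| := by ring
  · have hlower : |dirRemainder f v d p| - |(d - q) * p.2| ≤ |dirRemainder f v q p| := by
      rw [dirRemainder_eq_add f v q d]
      exact abs_sub_abs_le_abs_add _ _
    nlinarith [hshift p, abs_snd_le_dist p x, dist_nonneg (x := p) (y := (x, 0))]

end Directional

section Coordinates

variable {n : ℕ}

def truncAt (j : ℕ) (h : Fin n → ℝ) : Fin n → ℝ := fun k => if (k : ℕ) < j then h k else 0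

theorem truncAt_zero (h : Fin n → ℝ) : truncAt 0 h = 0 := by
  ext k
  simp [truncAt]

theorem truncAt_self (h : Fin n → ℝ) : truncAt n h = h := by
  ext k
  simp [truncAt]

theorem truncAt_succ (h : Fin n → ℝ) (j : Fin n) :
    truncAt (j + 1) h = truncAt j h + h j • Pi.single j 1 := by
  ext k
  by_cases hkj : k = j
  · subst hkj
    simp [truncAt]
  · have hkj' : (k : ℕ) ≠ j := Fin.val_ne_of_ne hkj
    simp only [truncAt, Pi.add_apply, Pi.smul_apply, Pi.single_apply, hkj, if_false,
      smul_zero, add_zero]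
    split_ifs <;> first | rfl | omega

theorem norm_truncAt_le (j : ℕ) (h : Fin n → ℝ) : ‖truncAt j h‖ ≤ ‖h‖ := by
  refine (pi_norm_le_iff_of_nonneg (norm_nonneg h)).2 fun k => ?_
  unfold truncAt
  split_ifs
  · exact norm_le_pi_norm h k
  · simp

theorem sub_sub_sum_eq_sum_dirRemainder (f : (Fin n → ℝ) → ℝ) (x h d : Fin n → ℝ) :
    f (x + h) - f x - ∑ j, d j * h j =
      ∑ j : Fin n, dirRemainder f (Pi.single j 1) (d j) (x + truncAt j h, h j) := by
  have hstep : ∀ j : Fin n, dirRemainder f (Pi.single j 1) (d j) (x + truncAt j h, h j) =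
      f (x + truncAt (j + 1) h) - f (x + truncAt j h) - d j * h j := fun j => by
    rw [truncAt_succ, ← add_assoc]
    rfl
  rw [Finset.sum_congr rfl fun j _ => hstep j, Finset.sum_sub_distrib,
    Fin.sum_univ_eq_sum_range (fun j => f (x + truncAt (j + 1) h) - f (x + truncAt j h)),
    Finset.sum_range_sub (fun j => f (x + truncAt j h)), truncAt_zero, truncAt_self, add_zero]

theorem hasFDerivAt_of_isLittleO_dirRemainder {f : (Fin n → ℝ) → ℝ} {x d : Fin n → ℝ}
    (hd : ∀ i, dirRemainder f (Pi.single i 1) (d i) =o[𝓝 (x, 0)] fun p => p - (x, 0)) :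
    HasFDerivAt f (∑ i, d i • ContinuousLinearMap.proj i : (Fin n → ℝ) →L[ℝ] ℝ) x := by
  rw [hasFDerivAt_iff_isLittleO_nhds_zero]
  have hterm : ∀ j : Fin n, (fun h => dirRemainder f (Pi.single j 1) (d j)
      (x + truncAt j h, h j)) =o[𝓝 0] fun h => h := fun j => by
    set g : (Fin n → ℝ) → (Fin n → ℝ) × ℝ := fun h => (x + truncAt j h, h j)
    have hg : (fun h => g h - (x, 0)) =O[𝓝 0] fun h => h :=
      IsBigO.of_bound 1 (Eventually.of_forall fun h => by
        simpa [g, Prod.norm_def, norm_truncAt_le] using norm_le_pi_norm h j)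
    have hgx : Tendsto g (𝓝 0) (𝓝 (x, 0)) :=
      tendsto_sub_nhds_zero_iff.1 (hg.trans_tendsto tendsto_id)
    exact ((hd j).comp_tendsto hgx).trans_isBigO hg
  simpa [sub_sub_sum_eq_sum_dirRemainder] using
    IsLittleO.fun_sum fun j (_ : j ∈ Finset.univ) => hterm j

theorem HasDerivAt.comp_add_smul_single {f : (Fin n → ℝ) → ℝ} {x : Fin n → ℝ} {i : Fin n}
    {d : ℝ} (hd : HasDerivAt (fun t => f (Function.update x i t)) d (x i)) :
    HasDerivAt (fun s : ℝ => f (x + s • Pi.single i 1)) d 0 := by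
  have hupd : ∀ s : ℝ, Function.update x i (x i + s) = x + s • Pi.single i 1 := fun s => by
    ext k
    by_cases hki : k = i
    · subst hki
      simp
    · simp [hki]
  simp only [← hupd]
  exact HasDerivAt.comp_const_add (x i) 0 (by rwa [add_zero])

def partialsNondiffSet (f : (Fin n → ℝ) → ℝ) : Set (Fin n → ℝ) :=
  {x | (∀ i, ∃ d, HasDerivAt (fun t => f (Function.update x i t)) d (x i)) ∧
    ¬ DifferentiableAt ℝ f x}

theorem partialsNondiffSet_subset_iUnion (f : (Fin n → ℝ) → ℝ) :
    partialsNondiffSet f ⊆ ⋃ p : Fin n × ℚ × ℕ × ℕ,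
      dirDefectSet f (Pi.single p.1 1) p.2.1 (1 / (p.2.2.1 + 1)) (1 / (p.2.2.2 + 1)) := by
  rintro x ⟨hpart, hnd⟩
  choose d hd using hpart
  obtain ⟨i, hi⟩ :
      ∃ i, ¬ dirRemainder f (Pi.single i 1) (d i) =o[𝓝 (x, 0)] fun p => p - (x, 0) := by
    by_contra! h
    exact hnd (hasFDerivAt_of_isLittleO_dirRemainder h).differentiableAt
  obtain ⟨q, k, m, hx⟩ := exists_mem_dirDefectSet (hd i).comp_add_smul_single hi
  exact mem_iUnion.2 ⟨(i, q, k, m), hx⟩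

theorem LipschitzWith.sigmaPorous_partialsNondiffSet {K : NNReal} {f : (Fin n → ℝ) → ℝ}
    (hf : LipschitzWith K f) : SigmaPorous (partialsNondiffSet f) :=
  (sigmaPorous_iUnion fun _ => hf.porous_dirDefectSet _ _ (by positivity) (by positivity)).mono
    (partialsNondiffSet_subset_iUnion f)

theorem inter_partialsNondiffSet_subset {G : Set (Fin n → ℝ)} (hG : IsOpen G)
    {f F : (Fin n → ℝ) → ℝ} (hfF : EqOn f F G) :
    G ∩ partialsNondiffSet f ⊆ partialsNondiffSet F := by
  rintro x ⟨hxG, hpart, hnd⟩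
  have hfx : f =ᶠ[𝓝 x] F := eventuallyEq_of_mem (hG.mem_nhds hxG) hfF
  refine ⟨fun i => ?_, fun hF => hnd (hF.congr_of_eventuallyEq hfx)⟩
  obtain ⟨d, hd⟩ := hpart i
  have hupd : Tendsto (Function.update x i) (𝓝 (x i)) (𝓝 x) := by
    have hcont : Continuous fun t => Function.update x i t :=
      continuous_const.update i continuous_id
    simpa using hcont.tendsto (x i)
  exact ⟨d, hd.congr_of_eventuallyEq (hfx.symm.comp_tendsto hupd)⟩

end Coordinates

theorem sigmaPorous_partials_exist_not_differentiable
    (n : ℕ) (G : Set (Fin n → ℝ)) (hG : IsOpen G)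
    (f : (Fin n → ℝ) → ℝ) (K : NNReal) (hf : LipschitzOnWith K f G) :
    SigmaPorous {x ∈ G |
      (∀ i : Fin n, ∃ d : ℝ, HasDerivAt (fun t : ℝ => f (Function.update x i t)) d (x i)) ∧
      ¬ DifferentiableAt ℝ f x} ∧
    IsMeagre {x ∈ G |
      (∀ i : Fin n, ∃ d : ℝ, HasDerivAt (fun t : ℝ => f (Function.update x i t)) d (x i)) ∧
      ¬ DifferentiableAt ℝ f x} ∧
    MeasureTheory.volume {x ∈ G |
      (∀ i : Fin n, ∃ d : ℝ, HasDerivAt (fun t : ℝ => f (Function.update x i t)) d (x i)) ∧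
      ¬ DifferentiableAt ℝ f x} = 0 := by
  obtain ⟨F, hF, hfF⟩ := hf.extend_real
  have hsub : G ∩ partialsNondiffSet f ⊆ partialsNondiffSet F :=
    inter_partialsNondiffSet_subset hG hfF
  have hσ := hF.sigmaPorous_partialsNondiffSet.mono hsub
  refine ⟨hσ, hσ.isMeagre, MeasureTheory.measure_mono_null (hsub.trans fun x hx => hx.2) ?_⟩
  exact MeasureTheory.ae_iff.1 hF.ae_differentiableAt
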